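/- arXiv:2402.03849 — 3 statements merged into one kernel-verified Lean document; each statement's English description precedes it below -/
import Mathlib

section
/- For all natural numbers k and ℓ with 1 ≤ k ≤ ℓ and ℓ ≥ 2, there exists a (k, ℓ)-perfect hash family H of size at most ⌈k · e^k · ln ℓ⌉; that is, there exists a family H of functions from Fin ℓ to Fin k with |H| ≤ ⌈k · e^k · ln ℓ⌉ such that for every subset S ⊆ Fin ℓ with |S| = k there exists h ∈ H that is injective on S. -/
open Finset

/-- `k^k ≤ k! * e^k`. -/
lemma phf_pow_le_factorial_mul_exp (k : ℕ) : (k:ℝ)^k ≤ (k.factorial : ℝ) * Real.exp k := by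
  have h := Real.sum_le_exp_of_nonneg (x := (k:ℝ)) (by positivity) (k+1)
  have h2 : (k:ℝ)^k / k.factorial ≤ Real.exp k :=
    le_trans (Finset.single_le_sum (f := fun i => (k:ℝ)^i / (i.factorial : ℝ))
      (fun i _ => by positivity) (Finset.self_mem_range_succ k)) h
  have hf : (0:ℝ) < (k.factorial : ℝ) := by positivity
  calc (k:ℝ)^k = (k:ℝ)^k / k.factorial * k.factorial := by field_simp
  _ ≤ Real.exp k * k.factorial := by gcongr
  _ = _ := mul_comm _ _

/-- Counting: at least `k! * k^(ℓ-k)` functions are injective on a given `k`-set. -/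
lemma phf_inj_count (k ℓ : ℕ) (S : Finset (Fin ℓ)) (hS : S.card = k) :
    k.factorial * k ^ (ℓ - k) ≤
      (Finset.univ.filter (fun g : Fin ℓ → Fin k => Set.InjOn g ↑S)).card := by
  classical
  have key : Fintype.card ((↥S ↪ Fin k) × ({x : Fin ℓ // x ∉ S} → Fin k)) ≤
      Fintype.card {g : Fin ℓ → Fin k // Set.InjOn g ↑S} := by
    apply Fintype.card_le_of_injective
      (fun p => ⟨fun x => if h : x ∈ S then p.1 ⟨x, h⟩ else p.2 ⟨x, h⟩, by
        intro x hx y hy hxy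
        simp only [Finset.coe_sort_coe, Finset.mem_coe] at hx hy
        simp only [dif_pos hx, dif_pos hy] at hxy
        exact congrArg Subtype.val (p.1.injective hxy)⟩)
    rintro ⟨u, v⟩ ⟨u', v'⟩ h
    have h' := congrArg Subtype.val h
    simp only at h'
    have huu : u = u' := by
      ext a
      have := congrFun h' a.1
      exact congrArg Fin.val (by simpa [dif_pos a.2] using this)
    have hvv : v = v' := by
      funext b
      have := congrFun h' b.1
      simpa [dif_neg b.2] using this
    simp [huu, hvv]
  have hc1 : Fintype.card ((↥S ↪ Fin k) × ({x : Fin ℓ // x ∉ S} → Fin k)) =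
      k.factorial * k ^ (ℓ - k) := by
    rw [Fintype.card_prod, Fintype.card_embedding_eq, Fintype.card_fun]
    simp only [Fintype.card_coe, hS, Fintype.card_fin, Nat.descFactorial_self]
    congr 2
    rw [Fintype.card_subtype_compl]
    simp [hS]
  rw [← Fintype.card_subtype]
  rw [hc1] at key
  exact key

/-- The key real inequality. -/
lemma phf_key (k ℓ t : ℕ) (hk : 1 ≤ k) (hkl : k ≤ ℓ) (hℓ : 2 ≤ ℓ) (ht1 : 1 ≤ t)
    (ht : (k:ℝ) * Real.exp k * Real.log ℓ ≤ t) :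
    (ℓ.choose k : ℝ) * ((k:ℝ)^ℓ - (k.factorial : ℝ) * (k:ℝ)^(ℓ-k))^t < ((k:ℝ)^ℓ)^t := by
  have hk0 : (0:ℝ) < (k:ℝ) := by exact_mod_cast hk
  have hkk : (0:ℝ) < (k:ℝ)^k := by positivity
  set p : ℝ := (k.factorial : ℝ) / (k:ℝ)^k with hp
  have hp0 : 0 < p := by positivity
  have hp1 : p ≤ 1 := by
    rw [div_le_one hkk]
    exact_mod_cast Nat.factorial_le_pow k
  have hsub : (k:ℝ)^ℓ - (k.factorial : ℝ) * (k:ℝ)^(ℓ-k) = (k:ℝ)^ℓ * (1 - p) := by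
    have h1 : (k:ℝ)^(ℓ-k) = (k:ℝ)^ℓ / (k:ℝ)^k := by
      rw [eq_div_iff (by positivity), ← pow_add, Nat.sub_add_cancel hkl]
    rw [h1, hp]; field_simp
  rw [hsub, mul_pow]
  have hlogℓ : 0 < Real.log ℓ := Real.log_pos (by exact_mod_cast hℓ)
  have h1 : (1 - p)^t < Real.exp (-p) ^ t := by
    apply pow_lt_pow_left₀ _ (by linarith) (by omega)
    have := Real.add_one_lt_exp (x := -p) (by linarith)
    linarith
  have hpek : Real.exp (-(k:ℝ)) ≤ p := by
    rw [hp, le_div_iff₀ hkk, Real.exp_neg, inv_mul_le_iff₀ (Real.exp_pos _)]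
    calc (k:ℝ)^k ≤ (k.factorial : ℝ) * Real.exp k := phf_pow_le_factorial_mul_exp k
    _ = Real.exp k * k.factorial := mul_comm _ _
  have hpt : (k:ℝ) * Real.log ℓ ≤ p * t := by
    have ht0 : (0:ℝ) ≤ t := by positivity
    calc (k:ℝ) * Real.log ℓ = Real.exp (-(k:ℝ)) * ((k:ℝ) * Real.exp k * Real.log ℓ) := by
          rw [Real.exp_neg]; field_simp
    _ ≤ Real.exp (-(k:ℝ)) * t := mul_le_mul_of_nonneg_left ht (Real.exp_pos _).le
    _ ≤ p * t := mul_le_mul_of_nonneg_right hpek ht0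
  have h2 : Real.exp (-p) ^ t ≤ 1 / (ℓ:ℝ)^k := by
    rw [← Real.exp_nat_mul]
    rw [div_eq_inv_mul, mul_one, ← Real.exp_log (x := ((ℓ:ℝ)^k)) (by positivity), ← Real.exp_neg]
    apply Real.exp_le_exp.mpr
    rw [Real.log_pow]
    nlinarith
  have hchoose : (ℓ.choose k : ℝ) ≤ (ℓ:ℝ)^k := by exact_mod_cast Nat.choose_le_pow ℓ k
  have hℓk : (0:ℝ) < (ℓ:ℝ)^k := by positivity
  have hkl0 : (0:ℝ) < ((k:ℝ)^ℓ)^t := by positivity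
  calc (ℓ.choose k : ℝ) * (((k:ℝ)^ℓ)^t * (1 - p)^t)
      ≤ (ℓ:ℝ)^k * (((k:ℝ)^ℓ)^t * (1 - p)^t) :=
        mul_le_mul_of_nonneg_right hchoose (mul_nonneg (by positivity) (pow_nonneg (by linarith) t))
    _ < (ℓ:ℝ)^k * (((k:ℝ)^ℓ)^t * Real.exp (-p)^t) :=
        mul_lt_mul_of_pos_left (mul_lt_mul_of_pos_left h1 hkl0) hℓk
    _ ≤ (ℓ:ℝ)^k * (((k:ℝ)^ℓ)^t * (1 / (ℓ:ℝ)^k)) :=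
        mul_le_mul_of_nonneg_left (mul_le_mul_of_nonneg_left h2 hkl0.le) hℓk.le
    _ = ((k:ℝ)^ℓ)^t := by field_simp

/-- For all natural numbers `k` and `ℓ` with `1 ≤ k ≤ ℓ` and `ℓ ≥ 2`, there exists a
`(k, ℓ)`-perfect hash family `H` of functions `Fin ℓ → Fin k` of size at most
`⌈k · e^k · ln ℓ⌉`: for every subset `S ⊆ Fin ℓ` with `|S| = k` there is `h ∈ H`
injective on `S`. -/
theorem perfect_hash_family_exists (k ℓ : ℕ) (hk : 1 ≤ k) (hkl : k ≤ ℓ) (hℓ : 2 ≤ ℓ) :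
    ∃ H : Finset (Fin ℓ → Fin k),
      H.card ≤ ⌈(k : ℝ) * Real.exp k * Real.log ℓ⌉₊ ∧
      ∀ S : Finset (Fin ℓ), S.card = k → ∃ h ∈ H, Set.InjOn h ↑S := by
  classical
  set t := ⌈(k : ℝ) * Real.exp k * Real.log ℓ⌉₊ with htdef
  have ht1 : 1 ≤ t := by
    rw [htdef]
    have hk0 : (0:ℝ) < (k:ℝ) := by exact_mod_cast hk
    have hlog : (0:ℝ) < Real.log ℓ := Real.log_pos (by exact_mod_cast hℓ)
    exact Nat.ceil_pos.mpr (mul_pos (mul_pos hk0 (Real.exp_pos _)) hlog)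
  have ht : (k:ℝ) * Real.exp k * Real.log ℓ ≤ t := Nat.le_ceil _
  set B : Finset (Fin ℓ) → Finset (Fin ℓ → Fin k) :=
    fun S => Finset.univ.filter (fun g => ¬ Set.InjOn g ↑S) with hB
  set A : Finset (Fin t → Fin ℓ → Fin k) :=
    Finset.univ.filter (fun f => ∃ S ∈ Finset.powersetCard k (Finset.univ : Finset (Fin ℓ)),
      ∀ i, ¬ Set.InjOn (f i) ↑S) with hA
  have hGle : k.factorial * k ^ (ℓ - k) ≤ k ^ ℓ := by
    calc k.factorial * k ^ (ℓ-k) ≤ k^k * k^(ℓ-k) :=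
          Nat.mul_le_mul_right _ (Nat.factorial_le_pow k)
    _ = k ^ ℓ := by rw [← pow_add, Nat.add_sub_cancel' hkl]
  have hBcard : ∀ S ∈ Finset.powersetCard k (Finset.univ : Finset (Fin ℓ)),
      (B S).card ≤ k ^ ℓ - k.factorial * k ^ (ℓ - k) := by
    intro S hS
    rw [Finset.mem_powersetCard] at hS
    have h1 := phf_inj_count k ℓ S hS.2
    have htot := Finset.card_filter_add_card_filter_not
      (s := (Finset.univ : Finset (Fin ℓ → Fin k))) (p := fun g => Set.InjOn g ↑S)
    have hcuniv : (Finset.univ : Finset (Fin ℓ → Fin k)).card = k ^ ℓ := by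
      simp [Finset.card_univ, Fintype.card_fun]
    simp only [hB]
    omega
  have hAsub : A ⊆ (Finset.powersetCard k (Finset.univ : Finset (Fin ℓ))).biUnion
      (fun S => Fintype.piFinset (fun _ : Fin t => B S)) := by
    intro f hf
    rw [hA, Finset.mem_filter] at hf
    obtain ⟨-, S, hS, hSf⟩ := hf
    refine Finset.mem_biUnion.mpr ⟨S, hS, ?_⟩
    rw [Fintype.mem_piFinset]
    intro i
    simp [hB, hSf i]
  have hAcard : A.card ≤ ℓ.choose k * (k ^ ℓ - k.factorial * k ^ (ℓ - k)) ^ t := by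
    calc A.card ≤ ∑ S ∈ Finset.powersetCard k (Finset.univ : Finset (Fin ℓ)),
          (Fintype.piFinset (fun _ : Fin t => B S)).card :=
        le_trans (Finset.card_le_card hAsub) Finset.card_biUnion_le
    _ ≤ ∑ _S ∈ Finset.powersetCard k (Finset.univ : Finset (Fin ℓ)),
          (k ^ ℓ - k.factorial * k ^ (ℓ - k)) ^ t := by
        apply Finset.sum_le_sum
        intro S hS
        rw [Fintype.card_piFinset]
        calc ∏ _i : Fin t, (B S).card = (B S).card ^ t := by
              simp [Finset.prod_const, Finset.card_univ]
        _ ≤ (k ^ ℓ - k.factorial * k ^ (ℓ - k)) ^ t :=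
              Nat.pow_le_pow_left (hBcard S hS) t
    _ = ℓ.choose k * (k ^ ℓ - k.factorial * k ^ (ℓ - k)) ^ t := by
        rw [Finset.sum_const, Finset.card_powersetCard, Finset.card_univ, Fintype.card_fin,
          smul_eq_mul]
  have hAlt : A.card < (k ^ ℓ) ^ t := by
    have hcast : ((k ^ ℓ - k.factorial * k ^ (ℓ - k) : ℕ) : ℝ) =
        (k:ℝ)^ℓ - (k.factorial : ℝ) * (k:ℝ)^(ℓ-k) := by
      rw [Nat.cast_sub hGle]; push_cast; ring
    have := phf_key k ℓ t hk hkl hℓ ht1 ht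
    have h2 : ((ℓ.choose k * (k ^ ℓ - k.factorial * k ^ (ℓ - k)) ^ t : ℕ) : ℝ) <
        (((k ^ ℓ) ^ t : ℕ) : ℝ) := by
      push_cast [hcast]
      exact this
    exact lt_of_le_of_lt hAcard (by exact_mod_cast h2)
  have hAne : A ≠ Finset.univ := by
    intro h
    rw [h, Finset.card_univ, Fintype.card_fun, Fintype.card_fun, Fintype.card_fin,
      Fintype.card_fin, Fintype.card_fin] at hAlt
    exact lt_irrefl _ hAlt
  rw [Ne, Finset.eq_univ_iff_forall] at hAne
  push_neg at hAne
  obtain ⟨f, hf⟩ := hAne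
  refine ⟨Finset.image f Finset.univ, ?_, ?_⟩
  · calc (Finset.image f Finset.univ).card ≤ Finset.univ.card := Finset.card_image_le
    _ = t := by rw [Finset.card_univ, Fintype.card_fin]
  · intro S hS
    have hf' : ¬ (∃ S' ∈ Finset.powersetCard k (Finset.univ : Finset (Fin ℓ)),
        ∀ i, ¬ Set.InjOn (f i) ↑S') := by
      intro hcon
      exact hf (by rw [hA, Finset.mem_filter]; exact ⟨Finset.mem_univ _, hcon⟩)
    push_neg at hf'
    obtain ⟨i, hi⟩ := hf' S (Finset.mem_powersetCard.mpr ⟨Finset.subset_univ S, hS⟩)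
    exact ⟨f i, Finset.mem_image_of_mem f (Finset.mem_univ i), hi⟩
end

section
/- There is a universal constant c₀ > 0 such that the following holds. For every finite simple graph H on n' ≥ 1 vertices and all natural numbers n ≤ M with n ≥ 1 and M ≥ 4, there exist a finite certificate set C with |C| ≤ 2^(c₀ · (n · log₂(n' + 1) + log₂(log₂ M) + 1)) and a verification algorithm A : Fin M → Finset (Fin M) → C → Bool such that for every finite simple graph G on a vertex set V with |V| = n and every injective identifier assignment Id : V → Fin M: there exists c ∈ C with A (Id u) ({Id v : v ∈ N(u)}) c = true for every vertex u ∈ V, if and only if there exists a graph homomorphism from G to H. -/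
/-!
A uniformly random map `Fin M → Fin (2n)` is injective on a fixed `n`-set with probability at
least `2⁻ⁿ`. A union bound over the `M.choose n < 2^(n (log₂ M + 1))` such sets shows that some
`K = 2ⁿ · n · (log₂ M + 1)` maps form a perfect hash family: every `n`-set of identifiers is
mapped injectively by one of them. A certificate is the index `i` of a good map `hᵢ` together
with a colouring `ψ : Fin (2n) → V(H)`, and a vertex `u` accepts iff `ψ (hᵢ (Id u))` is adjacent
in `H` to `ψ (hᵢ (Id v))` for every neighbour `v`. Accepted certificates are exactly those for
which `ψ ∘ hᵢ ∘ Id` is a homomorphism, and since `hᵢ ∘ Id` is injective every homomorphism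
factors this way. There are `K · n'^(2n) = 2^O(n log n' + log log M)` certificates.
-/

open Finset Real

theorem exists_tuple_forall_exists_of_sum_pow_lt {ι α : Type*} [Fintype α]
    (s : Finset ι) (P : ι → α → Prop) [∀ i, DecidablePred (P i)] (K : ℕ)
    (h : ∑ i ∈ s, #{a | ¬ P i a} ^ K < Fintype.card α ^ K) :
    ∃ ω : Fin K → α, ∀ i ∈ s, ∃ k, P i (ω k) := by
  classical
  by_contra! hbad
  have hcover : (univ : Finset (Fin K → α)) ⊆
      s.biUnion fun i => Fintype.piFinset fun _ => {a | ¬ P i a} := by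
    intro ω _
    obtain ⟨i, hi, hω⟩ := hbad ω
    simpa [hi] using ⟨i, hi, hω⟩
  have := (card_le_card hcover).trans card_biUnion_le
  simp only [card_univ, Fintype.card_fun, Fintype.card_fin, Fintype.card_piFinset,
    prod_const] at this
  omega

theorem card_subtype_injOn {α β : Type*} [Fintype α] [Fintype β]
    (S : Finset α) [Fintype {f : α → β // Set.InjOn f S}] :
    Fintype.card {f : α → β // Set.InjOn f S} =
      (Fintype.card β).descFactorial #S * Fintype.card β ^ (Fintype.card α - #S) := by
  classical
  let e : {f : α → β // Set.InjOn f S} ≃ ({x // x ∈ S} ↪ β) × ({x // x ∉ S} → β) :=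
    ((Equiv.piEquivPiSubtypeProd (· ∈ S) fun _ => β).subtypeEquiv
      (q := fun p => Function.Injective p.1) fun _ => Set.injOn_iff_injective).trans
      (Equiv.prodSubtypeFstEquivSubtypeProd.trans
        ((Equiv.subtypeInjectiveEquivEmbedding _ _).prodCongr (Equiv.refl _)))
  rw [Fintype.card_congr e, Fintype.card_prod, Fintype.card_embedding_eq, Fintype.card_fun,
    Fintype.card_subtype_compl, Fintype.card_coe]

theorem pow_card_le_two_pow_mul_card_injOn {α : Type*} [Fintype α] {n : ℕ}
    (S : Finset α) (hS : #S = n) [Fintype {f : α → Fin (2 * n) // Set.InjOn f S}] :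
    (2 * n) ^ Fintype.card α ≤ 2 ^ n * Fintype.card {f : α → Fin (2 * n) // Set.InjOn f S} := by
  have hnα : n ≤ Fintype.card α := hS ▸ S.card_le_univ
  have hdesc : n ^ n ≤ (2 * n).descFactorial n :=
    (Nat.pow_le_pow_left (by omega) n).trans (Nat.pow_sub_le_descFactorial (2 * n) n)
  rw [card_subtype_injOn, Fintype.card_fin, hS]
  calc (2 * n) ^ Fintype.card α = 2 ^ n * n ^ n * (2 * n) ^ (Fintype.card α - n) := by
        rw [← mul_pow, ← pow_add, Nat.add_sub_cancel' hnα]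
    _ ≤ 2 ^ n * (2 * n).descFactorial n * (2 * n) ^ (Fintype.card α - n) := by gcongr
    _ = _ := by ring

open Classical in
theorem card_not_injOn_le {α : Type*} [Fintype α] {n : ℕ} (S : Finset α) (hS : #S = n) :
    (#{f : α → Fin (2 * n) | ¬ Set.InjOn f S} : ℝ) ≤ (1 - 2⁻¹ ^ n) * (2 * n) ^ Fintype.card α := by
  have hgood := pow_card_le_two_pow_mul_card_injOn S hS
  have hsplit := card_filter_add_card_filter_not (s := univ)
    fun f : α → Fin (2 * n) => Set.InjOn f S
  rw [Fintype.card_subtype] at hgood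
  rw [card_univ, Fintype.card_fun, Fintype.card_fin] at hsplit
  have hgoodR :
      ((2 * n) ^ Fintype.card α : ℝ) ≤ 2 ^ n * #{f : α → Fin (2 * n) | Set.InjOn f S} := by
    exact_mod_cast hgood
  have hsplitR : (#{f : α → Fin (2 * n) | Set.InjOn f S} : ℝ) +
      #{f : α → Fin (2 * n) | ¬ Set.InjOn f S} = (2 * n) ^ Fintype.card α := by
    exact_mod_cast hsplit
  have hquot : ((2 * n) ^ Fintype.card α : ℝ) / 2 ^ n ≤
      #{f : α → Fin (2 * n) | Set.InjOn f S} := by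
    rw [div_le_iff₀ (by positivity)]
    linarith
  rw [inv_pow, sub_mul, one_mul, ← div_eq_inv_mul]
  linarith

theorem choose_mul_one_sub_pow_lt_one (M n : ℕ) (hn : n ≠ 0) :
    (M.choose n : ℝ) * (1 - 2⁻¹ ^ n) ^ (2 ^ n * n * (Nat.log 2 M + 1)) < 1 := by
  set L := Nat.log 2 M + 1
  have hchoose : (M.choose n : ℝ) < exp (n * L) := by
    have hM : M ^ n < (2 ^ L) ^ n :=
      Nat.pow_lt_pow_left (Nat.lt_pow_succ_log_self one_lt_two M) hn
    have h2 : (2 : ℝ) ^ L ≤ exp L := by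
      rw [← exp_one_pow]
      exact pow_le_pow_left₀ (by norm_num) (by linarith [add_one_le_exp 1]) L
    calc (M.choose n : ℝ) ≤ M ^ n := by exact_mod_cast Nat.choose_le_pow M n
      _ < (2 ^ L) ^ n := by exact_mod_cast hM
      _ ≤ exp L ^ n := by gcongr
      _ = exp (n * L) := by rw [← exp_nat_mul]
  have hpow : (1 - 2⁻¹ ^ n : ℝ) ^ (2 ^ n * n * L) ≤ exp (-(n * L)) := by
    calc (1 - 2⁻¹ ^ n : ℝ) ^ (2 ^ n * n * L) ≤ exp (-2⁻¹ ^ n) ^ (2 ^ n * n * L) :=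
          pow_le_pow_left₀ (by simp [inv_pow, inv_le_one_of_one_le₀, one_le_pow₀])
            (one_sub_le_exp_neg _) _
      _ = exp (-(n * L)) := by
          have h : (2 : ℝ) ^ n * 2⁻¹ ^ n = 1 := by rw [← mul_pow]; norm_num
          rw [← exp_nat_mul]
          congr 1
          push_cast
          linear_combination (-(n * L : ℝ)) * h
  calc (M.choose n : ℝ) * (1 - 2⁻¹ ^ n) ^ (2 ^ n * n * L) ≤ M.choose n * exp (-(n * L)) := by
        gcongr
    _ < exp (n * L) * exp (-(n * L)) := by gcongr
    _ = 1 := by rw [← exp_add, add_neg_cancel, exp_zero]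

def IsPerfectHashFamily {ι α β : Type*} (h : ι → α → β) (n : ℕ) : Prop :=
  ∀ S : Finset α, #S = n → ∃ i, Set.InjOn (h i) S

theorem exists_isPerfectHashFamily (α : Type*) [Fintype α] {n : ℕ} (hn : n ≠ 0) :
    ∃ h : Fin (2 ^ n * n * (Nat.log 2 (Fintype.card α) + 1)) → α → Fin (2 * n),
      IsPerfectHashFamily h n := by
  classical
  set K := 2 ^ n * n * (Nat.log 2 (Fintype.card α) + 1)
  set T := (2 * n) ^ Fintype.card α
  have hT : (0 : ℝ) < T ^ K := by positivity
  have hsumR : (∑ S ∈ powersetCard n (univ : Finset α),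
      (#{f : α → Fin (2 * n) | ¬ Set.InjOn f S} : ℝ) ^ K) < (T : ℝ) ^ K :=
    calc _ ≤ #(powersetCard n (univ : Finset α)) • ((1 - 2⁻¹ ^ n) * (T : ℝ)) ^ K := by
          apply sum_le_card_nsmul
          intro S hS
          exact pow_le_pow_left₀ (Nat.cast_nonneg _)
            (by exact_mod_cast card_not_injOn_le S (mem_powersetCard.1 hS).2) K
      _ = ((Fintype.card α).choose n * (1 - 2⁻¹ ^ n) ^ K) * T ^ K := by
          rw [card_powersetCard, card_univ, nsmul_eq_mul, mul_pow]; ring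
      _ < 1 * T ^ K := by gcongr; exact choose_mul_one_sub_pow_lt_one _ n hn
      _ = T ^ K := one_mul _
  have hsum : ∑ S ∈ powersetCard n (univ : Finset α),
      #{f : α → Fin (2 * n) | ¬ Set.InjOn f S} ^ K < Fintype.card (α → Fin (2 * n)) ^ K := by
    rw [Fintype.card_fun, Fintype.card_fin]
    exact_mod_cast hsumR
  obtain ⟨ω, hω⟩ := exists_tuple_forall_exists_of_sum_pow_lt (powersetCard n univ)
    (fun (S : Finset α) (f : α → Fin (2 * n)) => Set.InjOn f S) K hsum
  exact ⟨ω, fun S hS => hω S (mem_powersetCard.2 ⟨subset_univ S, hS⟩)⟩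

open Classical in
noncomputable def homCertificate {α ι β W : Type*} (H : SimpleGraph W) (h : ι → α → β) (x : α)
    (N : Finset α) (c : ι × (β → W)) : Bool :=
  decide (∀ y ∈ N, H.Adj (c.2 (h c.1 x)) (c.2 (h c.1 y)))

section Certification

variable {α ι β V W : Type*} [DecidableEq α] [Fintype V] (G : SimpleGraph V) [DecidableRel G.Adj]
  (H : SimpleGraph W) (h : ι → α → β) (Id : V → α)

theorem nonempty_hom_of_homCertificate (c : ι × (β → W))
    (hc : ∀ u, homCertificate H h (Id u) ((G.neighborFinset u).image Id) c = true) :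
    Nonempty (G →g H) := by
  refine ⟨⟨fun v => c.2 (h c.1 (Id v)), fun {u v} huv => ?_⟩⟩
  have := hc u
  simp only [homCertificate, decide_eq_true_eq] at this
  exact this (Id v) (mem_image_of_mem _ ((G.mem_neighborFinset u v).2 huv))

theorem exists_homCertificate_of_hom [Nonempty W] {n : ℕ} (hh : IsPerfectHashFamily h n)
    (hV : Fintype.card V = n) (hId : Function.Injective Id) (φ : G →g H) :
    ∃ c : ι × (β → W), ∀ u, homCertificate H h (Id u) ((G.neighborFinset u).image Id) c = true := by
  classical
  obtain ⟨i, hi⟩ := hh (univ.image Id) (by rw [card_image_of_injective _ hId, card_univ, hV])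
  have hinj : Function.Injective (h i ∘ Id) := fun u v huv =>
    hId (hi (by simp) (by simp) huv)
  refine ⟨(i, Function.extend (h i ∘ Id) φ fun _ => Classical.arbitrary W), fun u => ?_⟩
  simp only [homCertificate, decide_eq_true_eq, forall_mem_image]
  intro v huv
  rw [← Function.comp_apply (f := h i), ← Function.comp_apply (f := h i) (x := v),
    hinj.extend_apply, hinj.extend_apply]
  exact φ.map_adj ((G.mem_neighborFinset u v).1 huv)

theorem exists_homCertificate_iff [Nonempty W] {n : ℕ} (hh : IsPerfectHashFamily h n)
    (hV : Fintype.card V = n) (hId : Function.Injective Id) :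
    (∃ c : ι × (β → W), ∀ u, homCertificate H h (Id u) ((G.neighborFinset u).image Id) c = true) ↔
      Nonempty (G →g H) :=
  ⟨fun ⟨c, hc⟩ => nonempty_hom_of_homCertificate G H h Id c hc,
    fun ⟨φ⟩ => exists_homCertificate_of_hom G H h Id hh hV hId φ⟩

end Certification

theorem two_pow_mul_log_mul_pow_le_two_rpow (n n' M : ℕ) (hn' : 1 ≤ n') (hM : 2 ≤ M) :
    ((2 ^ n * n * (Nat.log 2 M + 1) * n' ^ (2 * n) : ℕ) : ℝ) ≤
      2 ^ (4 * ((n : ℝ) * logb 2 ((n' : ℝ) + 1) + logb 2 (logb 2 (M : ℝ)) + 1)) := by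
  have hlog : 1 ≤ Nat.log 2 M := Nat.le_log_of_pow_le one_lt_two (by simpa using hM)
  have hK : 2 ^ n * n * (Nat.log 2 M + 1) ≤ 2 ^ (2 * n + 1) * Nat.log 2 M :=
    calc 2 ^ n * n * (Nat.log 2 M + 1) ≤ 2 ^ n * 2 ^ n * (2 * Nat.log 2 M) := by
          gcongr
          · exact n.lt_two_pow_self.le
          · omega
      _ = 2 ^ (2 * n + 1) * Nat.log 2 M := by ring
  have hlogM : (1 : ℝ) ≤ logb 2 M := (Nat.one_le_cast.2 hlog).trans (natLog_le_logb M 2)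
  have hlogn' : (1 : ℝ) ≤ logb 2 (n' + 1) := by
    rw [le_logb_iff_rpow_le one_lt_two (by positivity), rpow_one]
    exact_mod_cast Nat.succ_le_succ hn'
  calc ((2 ^ n * n * (Nat.log 2 M + 1) * n' ^ (2 * n) : ℕ) : ℝ)
      ≤ ((2 ^ (2 * n + 1) * Nat.log 2 M * n' ^ (2 * n) : ℕ) : ℝ) := by
        exact_mod_cast Nat.mul_le_mul_right _ hK
    _ ≤ (2 ^ (2 * n + 1) * logb 2 M) * (n' + 1) ^ (2 * n) := by
        push_cast
        gcongr
        · exact natLog_le_logb M 2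
        · linarith
    _ = 2 ^ (((2 * n + 1 : ℕ) : ℝ) + logb 2 (logb 2 M) + logb 2 (n' + 1) * (2 * n : ℕ)) := by
        rw [rpow_add two_pos, rpow_add two_pos, rpow_natCast, rpow_logb two_pos (by norm_num)
          (by linarith), rpow_mul two_pos.le, rpow_logb two_pos (by norm_num) (by positivity),
          rpow_natCast]
    _ ≤ 2 ^ (4 * ((n : ℝ) * logb 2 ((n' : ℝ) + 1) + logb 2 (logb 2 (M : ℝ)) + 1)) := by
        have hloglog : 0 ≤ logb 2 (logb 2 (M : ℝ)) := logb_nonneg one_lt_two hlogM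
        gcongr
        · norm_num
        · push_cast
          nlinarith

/-- Global certification of the existence of a homomorphism to a fixed graph `H` on `n'`
vertices, with certificates of size `O(n · log n' + log log M)`. -/
theorem global_certification_homomorphism :
    ∃ c₀ : ℝ, 0 < c₀ ∧
      ∀ (n' n M : ℕ) (H : SimpleGraph (Fin n')), 1 ≤ n' → 1 ≤ n → n ≤ M → 4 ≤ M →
        ∃ (C : Type) (instC : Fintype C) (A : Fin M → Finset (Fin M) → C → Bool),
          (@Fintype.card C instC : ℝ) ≤
            2 ^ (c₀ * ((n : ℝ) * Real.logb 2 ((n' : ℝ) + 1) +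
              Real.logb 2 (Real.logb 2 (M : ℝ)) + 1)) ∧
          ∀ (V : Type) [Fintype V] [DecidableEq V] (G : SimpleGraph V) [DecidableRel G.Adj],
            Fintype.card V = n →
            ∀ Id : V → Fin M, Function.Injective Id →
              ((∃ c : C, ∀ u : V, A (Id u) ((G.neighborFinset u).image Id) c = true) ↔
                Nonempty (G →g H)) := by
  refine ⟨4, by norm_num, fun n' n M H hn' hn _ hM => ?_⟩
  obtain ⟨h, hh⟩ := exists_isPerfectHashFamily (Fin M) (n := n) (by omega)
  have : Nonempty (Fin n') := ⟨⟨0, hn'⟩⟩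
  refine ⟨_, inferInstance, homCertificate H h, ?_,
    fun V _ _ G _ hV Id hId => exists_homCertificate_iff G H h Id hh hV hId⟩
  simpa [Fintype.card_fin] using two_pow_mul_log_mul_pow_le_two_rpow n n' M hn' (by omega)
end

section
/- There is a universal constant c₀ > 0 such that the following holds. For all natural numbers n ≤ M with n ≥ 1 and M ≥ 4, there exist a finite certificate set C with |C| ≤ 2^(c₀ · (n + log₂(log₂ M) + 1)) and a verification algorithm A : Fin M → Finset (Fin M) → C → Bool such that for every finite simple graph G on a vertex set V with |V| = n and every injective identifier assignment Id : V → Fin M: there exists c ∈ C with A (Id u) ({Id v : v ∈ N(u)}) c = true for every vertex u ∈ V, if and only if G is bipartite (i.e., G admits a proper two-coloring). -/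
/-!
A certificate is the index `j` of a 2-colouring `g j` of the whole identifier range, taken from a
family that is `n`-universal: on every set of `n` identifiers it realises every colour pattern.
Vertex `u` accepts `j` iff `g j (Id u)` differs from the colours of all its neighbours, so some
certificate is accepted everywhere iff the graph has a proper 2-colouring. By the union bound a
family of `m = 2ⁿ n (log M + 2)` random colourings is universal: a fixed pattern on a fixed `n`-set
is missed by all of them with probability `(1 - 2⁻ⁿ)ᵐ ≤ 2^(-n (log M + 2)) < (2M)⁻ⁿ`, while there
are at most `(2M)ⁿ` such pairs. Finally `log m = O(n + log log M)`.
-/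

open Finset

def IsUniversalFamily {ι α β : Type*} (g : ι → α → β) (n : ℕ) : Prop :=
  ∀ S : Finset α, #S = n → ∀ χ : α → β, ∃ j, ∀ i ∈ S, g j i = χ i

section Verifier

variable {ι α β : Type*} [DecidableEq β] (g : ι → α → β)

def properColoringVerifier (i : α) (s : Finset α) (j : ι) : Bool :=
  decide (∀ k ∈ s, g j k ≠ g j i)

variable {V : Type*} (G : SimpleGraph V) [G.LocallyFinite] [DecidableEq α] (Id : V → α)

lemma properColoringVerifier_image_neighborFinset {j : ι} {u : V} :
    properColoringVerifier g (Id u) ((G.neighborFinset u).image Id) j = true ↔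
      ∀ v, G.Adj u v → g j (Id v) ≠ g j (Id u) := by
  simp [properColoringVerifier]

lemma exists_proper_of_forall_properColoringVerifier {j : ι}
    (h : ∀ u, properColoringVerifier g (Id u) ((G.neighborFinset u).image Id) j = true) :
    ∃ φ : V → β, ∀ u v, G.Adj u v → φ u ≠ φ v :=
  ⟨fun u => g j (Id u), fun u v huv =>
    ((properColoringVerifier_image_neighborFinset g G Id).1 (h u) v huv).symm⟩

lemma exists_forall_properColoringVerifier_of_proper [Fintype V] [Nonempty β] {n : ℕ}
    (hg : IsUniversalFamily g n) (hV : Fintype.card V = n) (hId : Function.Injective Id)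
    {φ : V → β} (hφ : ∀ u v, G.Adj u v → φ u ≠ φ v) :
    ∃ j, ∀ u, properColoringVerifier g (Id u) ((G.neighborFinset u).image Id) j = true := by
  obtain ⟨j, hj⟩ := hg (univ.image Id) (by rw [card_image_of_injective _ hId, card_univ, hV])
    (Function.extend Id φ fun _ => Classical.arbitrary β)
  have hgj : ∀ u, g j (Id u) = φ u := fun u =>
    (hj _ (mem_image_of_mem _ (mem_univ u))).trans (hId.extend_apply _ _ u)
  refine ⟨j, fun u => (properColoringVerifier_image_neighborFinset g G Id).2 fun v huv => ?_⟩
  rw [hgj, hgj]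
  exact (hφ u v huv).symm

theorem exists_forall_properColoringVerifier_iff [Fintype V] [Nonempty β] {n : ℕ}
    (hg : IsUniversalFamily g n) (hV : Fintype.card V = n) (hId : Function.Injective Id) :
    (∃ j, ∀ u, properColoringVerifier g (Id u) ((G.neighborFinset u).image Id) j = true) ↔
      ∃ φ : V → β, ∀ u v, G.Adj u v → φ u ≠ φ v :=
  ⟨fun ⟨_, h⟩ => exists_proper_of_forall_properColoringVerifier g G Id h,
    fun ⟨_, hφ⟩ => exists_forall_properColoringVerifier_of_proper g G Id hg hV hId hφ⟩

end Verifier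

section UnionBound

variable {α β : Type*} [Fintype α] [DecidableEq α] [Fintype β] [DecidableEq β]

lemma card_filter_forall_eq (S : Finset α) (ψ : S → β) :
    #{f : α → β | ∀ i : S, f i = ψ i} = Fintype.card β ^ (Fintype.card α - #S) := by
  have hpi : ({f : α → β | ∀ i : S, f i = ψ i} : Finset _) =
      Fintype.piFinset fun i => if h : i ∈ S then {ψ ⟨i, h⟩} else univ := by
    ext f
    simp only [mem_filter, mem_univ, true_and, Fintype.mem_piFinset]
    refine ⟨fun h i => ?_, fun h i => by simpa using h i⟩
    split_ifs with hi
    · exact mem_singleton.2 (h ⟨i, hi⟩)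
    · exact mem_univ _
  rw [hpi, Fintype.card_piFinset]
  simp only [apply_dite, card_singleton, card_univ, dite_eq_ite]
  rw [prod_ite, prod_const_one, one_mul, prod_const, filter_not, card_sdiff]
  simp

lemma card_filter_exists_ne (S : Finset α) (ψ : S → β) :
    #{f : α → β | ∃ i : S, f i ≠ ψ i} =
      Fintype.card β ^ Fintype.card α - Fintype.card β ^ (Fintype.card α - #S) := by
  have := card_filter_add_card_filter_not (s := univ) fun f : α → β => ∀ i : S, f i = ψ i
  simp only [not_forall, ← ne_eq, card_univ, Fintype.card_fun, card_filter_forall_eq] at this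
  omega

theorem exists_isUniversalFamily_of_card_lt {n m : ℕ}
    (h : (Fintype.card α).choose n * Fintype.card β ^ n *
        (Fintype.card β ^ Fintype.card α - Fintype.card β ^ (Fintype.card α - n)) ^ m
      < (Fintype.card β ^ Fintype.card α) ^ m) :
    ∃ g : Fin m → α → β, IsUniversalFamily g n := by
  by_contra! hbad
  simp only [IsUniversalFamily] at hbad
  push Not at hbad
  have hcover : (univ : Finset (Fin m → α → β)) ⊆ (powersetCard n univ).biUnion
      fun S : Finset α => (univ : Finset (S → β)).biUnion fun ψ =>
        Fintype.piFinset fun _ => {f : α → β | ∃ i : S, f i ≠ ψ i} := by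
    intro g _
    obtain ⟨S, hS, χ, hχ⟩ := hbad g
    simp only [mem_biUnion, mem_powersetCard_univ, mem_univ, true_and, Fintype.mem_piFinset,
      mem_filter]
    refine ⟨S, hS, fun i => χ i, fun j => ?_⟩
    obtain ⟨i, hi, hne⟩ := hχ j
    exact ⟨⟨i, hi⟩, hne⟩
  refine h.not_ge ?_
  calc (Fintype.card β ^ Fintype.card α) ^ m = #(univ : Finset (Fin m → α → β)) := by
        rw [card_univ, Fintype.card_fun, Fintype.card_fun, Fintype.card_fin]
    _ ≤ ∑ S ∈ powersetCard n (univ : Finset α), ∑ ψ : S → β,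
          #(Fintype.piFinset fun _ : Fin m => {f : α → β | ∃ i : S, f i ≠ ψ i}) :=
      (card_le_card hcover).trans <| card_biUnion_le.trans <| sum_le_sum fun _ _ => card_biUnion_le
    _ = (Fintype.card α).choose n * Fintype.card β ^ n *
          (Fintype.card β ^ Fintype.card α - Fintype.card β ^ (Fintype.card α - n)) ^ m := by
      rw [Finset.sum_congr rfl fun S hS => ?_, sum_const, card_powersetCard, card_univ,
        smul_eq_mul, mul_assoc]
      simp only [Fintype.card_piFinset, prod_const, card_filter_exists_ne, sum_const, card_univ,
        Fintype.card_fun, Fintype.card_coe, mem_powersetCard_univ.1 hS, Fintype.card_fin,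
        smul_eq_mul]

end UnionBound

def universalFamilySize (n M : ℕ) : ℕ := 2 ^ n * (n * (Nat.log 2 M + 2))

lemma two_mul_pow_succ_le_succ_pow_succ (a : ℕ) : 2 * a ^ (a + 1) ≤ (a + 1) ^ (a + 1) := by
  have bernoulli := pow_add_mul_le_add_pow (Nat.zero_le a) (by positivity : 0 ≤ 2 * a + 1) (a + 1)
  have : a ^ (a + 1) ≤ (a + 1) * a ^ a := by rw [pow_succ']; gcongr; omega
  simp only [Nat.cast_id, add_tsub_cancel_right, mul_one] at bernoulli
  omega

lemma choose_mul_two_pow_mul_pred_pow_lt {n M : ℕ} (hn : 1 ≤ n) :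
    M.choose n * 2 ^ n * (2 ^ n - 1) ^ universalFamilySize n M
      < (2 ^ n) ^ universalFamilySize n M := by
  unfold universalFamilySize
  set L := Nat.log 2 M + 2
  set k := 2 ^ n
  have hk : 2 ≤ k := le_self_pow₀ one_le_two (by omega)
  have h2M : 2 * M < 2 ^ L := by
    have := Nat.lt_pow_succ_log_self one_lt_two M
    rw [pow_succ] at this ⊢
    omega
  have hkey : 2 * (k - 1) ^ k ≤ k ^ k := by
    simpa [Nat.sub_add_cancel (by omega : 1 ≤ k)] using two_mul_pow_succ_le_succ_pow_succ (k - 1)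
  calc M.choose n * 2 ^ n * (k - 1) ^ (k * (n * L))
      ≤ M ^ n * 2 ^ n * (k - 1) ^ (k * (n * L)) := by gcongr; exact Nat.choose_le_pow M n
    _ = (2 * M) ^ n * (k - 1) ^ (k * (n * L)) := by ring
    _ < (2 ^ L) ^ n * (k - 1) ^ (k * (n * L)) := by
        gcongr
        exact pow_pos (by omega) _
    _ = (2 * (k - 1) ^ k) ^ (n * L) := by rw [mul_pow, ← pow_mul, ← pow_mul, mul_comm L n]
    _ ≤ (k ^ k) ^ (n * L) := by gcongr
    _ = k ^ (k * (n * L)) := by rw [← pow_mul]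

lemma choose_mul_two_pow_mul_pow_sub_pow_lt {n M : ℕ} (hn : 1 ≤ n) (hnM : n ≤ M) :
    M.choose n * 2 ^ n * (2 ^ M - 2 ^ (M - n)) ^ universalFamilySize n M
      < (2 ^ M) ^ universalFamilySize n M := by
  have hsplit : 2 ^ M = 2 ^ (M - n) * 2 ^ n := by rw [← pow_add, Nat.sub_add_cancel hnM]
  rw [hsplit, ← Nat.mul_sub_one, mul_pow, mul_pow, mul_left_comm]
  exact Nat.mul_lt_mul_of_pos_left (choose_mul_two_pow_mul_pred_pow_lt hn) (by positivity)

lemma two_le_logb_two_of_four_le {M : ℕ} (hM : 4 ≤ M) : 2 ≤ Real.logb 2 M := by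
  rw [Real.le_logb_iff_rpow_le one_lt_two (by positivity)]
  norm_num
  exact_mod_cast hM

lemma natLog_add_two_le_two_rpow_logb_logb_add_one {M : ℕ} (hM : 4 ≤ M) :
    (Nat.log 2 M : ℝ) + 2 ≤ 2 ^ (Real.logb 2 (Real.logb 2 M) + 1) := by
  have hlog := two_le_logb_two_of_four_le hM
  rw [Real.rpow_add_one two_ne_zero, Real.rpow_logb two_pos (by norm_num) (by linarith)]
  have := Real.natLog_le_logb M 2
  push_cast at this
  linarith

lemma universalFamilySize_le {n M : ℕ} (hM : 4 ≤ M) :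
    (universalFamilySize n M : ℝ) ≤ 2 ^ (3 * ((n : ℝ) + Real.logb 2 (Real.logb 2 M) + 1)) := by
  set t := Real.logb 2 (Real.logb 2 M)
  have ht : 0 ≤ t := Real.logb_nonneg one_lt_two (by linarith [two_le_logb_two_of_four_le hM])
  have hn : (n : ℝ) ≤ 2 ^ (n : ℝ) := by
    rw [Real.rpow_natCast]
    exact_mod_cast Nat.lt_two_pow_self.le
  calc (universalFamilySize n M : ℝ)
      = 2 ^ (n : ℝ) * (n * ((Nat.log 2 M : ℝ) + 2)) := by
        rw [universalFamilySize, Real.rpow_natCast]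
        push_cast
        rfl
    _ ≤ 2 ^ (n : ℝ) * (2 ^ (n : ℝ) * 2 ^ (t + 1)) := by
      gcongr
      exact natLog_add_two_le_two_rpow_logb_logb_add_one hM
    _ = 2 ^ ((n : ℝ) + (n + (t + 1))) := by simp only [Real.rpow_add two_pos]
    _ ≤ 2 ^ (3 * ((n : ℝ) + t + 1)) := by
      gcongr
      · norm_num
      · linarith

/-- Global certification of bipartiteness with certificates of size `O(n + log log M)`. -/
theorem global_certification_bipartiteness :
    ∃ c₀ : ℝ, 0 < c₀ ∧
      ∀ (n M : ℕ), 1 ≤ n → n ≤ M → 4 ≤ M →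
        ∃ (C : Type) (instC : Fintype C) (A : Fin M → Finset (Fin M) → C → Bool),
          (@Fintype.card C instC : ℝ) ≤
            2 ^ (c₀ * ((n : ℝ) + Real.logb 2 (Real.logb 2 (M : ℝ)) + 1)) ∧
          ∀ (V : Type) [Fintype V] [DecidableEq V] (G : SimpleGraph V) [DecidableRel G.Adj],
            Fintype.card V = n →
            ∀ Id : V → Fin M, Function.Injective Id →
              ((∃ c : C, ∀ u : V, A (Id u) ((G.neighborFinset u).image Id) c = true) ↔
                ∃ φ : V → Fin 2, ∀ u v : V, G.Adj u v → φ u ≠ φ v) := by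
  refine ⟨3, by norm_num, fun n M hn hnM hM => ?_⟩
  obtain ⟨g, hg⟩ : ∃ g : Fin (universalFamilySize n M) → Fin M → Fin 2, IsUniversalFamily g n :=
    exists_isUniversalFamily_of_card_lt (by simpa using choose_mul_two_pow_mul_pow_sub_pow_lt hn hnM)
  refine ⟨_, inferInstance, properColoringVerifier g, ?_, fun V _ _ G _ hV Id hId => ?_⟩
  · rw [Fintype.card_fin]
    exact universalFamilySize_le hM
  · exact exists_forall_properColoringVerifier_iff g G Id hg hV hId
end
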